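/- arXiv:2604.13798 — 7 statements merged into one kernel-verified Lean document; each statement's English description precedes it below -/
import Mathlib

section
/- For every real σ > 0 and every Y ∈ (1,2), the improper integral ∫₀^∞ (1 - exp(-σ·u^Y))/u² du converges and equals σ^(1/Y) · Γ(1 - 1/Y), where Γ is the real Gamma function. -/
open MeasureTheory Set Filter Topology Real

/-! Integrate by parts against `F u = (exp (-σ u ^ Y) - 1) / u`: since `Y > 1`,
`F u = O(u ^ (Y - 1))` at `0` and `F u = O(1 / u)` at infinity, so the boundary terms vanish and
the integral equals `σ Y ∫₀^∞ u ^ (Y - 2) exp (-σ u ^ Y) du`, a Gamma integral. -/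

variable {σ Y u : ℝ}

lemma one_sub_exp_neg_mul_rpow_nonneg (hσ : 0 ≤ σ) (hu : 0 ≤ u) :
    0 ≤ 1 - exp (-σ * u ^ Y) := by
  have : -σ * u ^ Y ≤ 0 := by
    rw [neg_mul, neg_nonpos]; exact mul_nonneg hσ (rpow_nonneg hu Y)
  linarith [exp_le_one_iff.2 this]

lemma one_sub_exp_neg_mul_rpow_le (σ Y u : ℝ) : 1 - exp (-σ * u ^ Y) ≤ σ * u ^ Y := by
  linarith [neg_mul σ (u ^ Y) ▸ one_sub_le_exp_neg (σ * u ^ Y)]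

lemma one_sub_exp_neg_mul_rpow_div_sq_le_mul_rpow (hu : 0 < u) :
    (1 - exp (-σ * u ^ Y)) / u ^ 2 ≤ σ * u ^ (Y - 2) := by
  rw [rpow_sub hu, rpow_two, ← mul_div_assoc]
  exact div_le_div_of_nonneg_right (one_sub_exp_neg_mul_rpow_le σ Y u) (sq_nonneg u)

lemma one_sub_exp_neg_mul_rpow_div_sq_le_rpow_neg_two (hu : 0 < u) :
    (1 - exp (-σ * u ^ Y)) / u ^ 2 ≤ u ^ (-2 : ℝ) := by
  rw [rpow_neg hu.le, rpow_two, inv_eq_one_div]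
  exact div_le_div_of_nonneg_right (by linarith [exp_pos (-σ * u ^ Y)]) (sq_nonneg u)

lemma norm_exp_neg_mul_rpow_sub_one_div (hσ : 0 ≤ σ) (hu : 0 < u) :
    ‖(exp (-σ * u ^ Y) - 1) / u‖ = (1 - exp (-σ * u ^ Y)) / u := by
  rw [← neg_sub, neg_div, norm_neg,
    norm_of_nonneg (div_nonneg (one_sub_exp_neg_mul_rpow_nonneg hσ hu.le) hu.le)]

lemma integrableOn_one_sub_exp_neg_mul_rpow_div_sq (hσ : 0 ≤ σ) (hY : 1 < Y) :
    IntegrableOn (fun u : ℝ => (1 - exp (-σ * u ^ Y)) / u ^ 2) (Ioi 0) := by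
  set f := fun u : ℝ => (1 - exp (-σ * u ^ Y)) / u ^ 2
  have hcont : ContinuousOn f (Ioi 0) := fun u (hu : 0 < u) =>
    ((continuousAt_const.sub ((continuousAt_rpow_const u Y (.inl hu.ne')).const_mul
      (-σ)).rexp).div (continuousAt_id.pow 2) (pow_ne_zero 2 hu.ne')).continuousWithinAt
  have of_le : ∀ s ⊆ Ioi (0 : ℝ), MeasurableSet s → ∀ g : ℝ → ℝ,
      IntegrableOn g s → (∀ u ∈ s, f u ≤ g u) → IntegrableOn f s := fun s hs hms g hg hfg =>
    hg.mono' ((hcont.mono hs).aestronglyMeasurable hms) <| (ae_restrict_iff' hms).2 <|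
      .of_forall fun u hu => by
        rw [norm_of_nonneg (div_nonneg (one_sub_exp_neg_mul_rpow_nonneg hσ (hs hu).le)
          (sq_nonneg u))]
        exact hfg u hu
  rw [← Ioc_union_Ioi_eq_Ioi zero_le_one]
  refine .union (of_le _ Ioc_subset_Ioi_self measurableSet_Ioc (fun u => σ * u ^ (Y - 2)) ?_
    fun u hu => one_sub_exp_neg_mul_rpow_div_sq_le_mul_rpow hu.1)
    (of_le _ (Ioi_subset_Ioi zero_le_one) measurableSet_Ioi (fun u => u ^ (-2 : ℝ))
      (integrableOn_Ioi_rpow_of_lt (by norm_num) zero_lt_one)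
      fun u hu => one_sub_exp_neg_mul_rpow_div_sq_le_rpow_neg_two (zero_lt_one.trans hu))
  exact (((intervalIntegral.integrableOn_Ioo_rpow_iff zero_lt_two).2 (by linarith)).mono_set
    (Ioc_subset_Ioo_right one_lt_two)).const_mul σ

lemma hasDerivAt_exp_neg_mul_rpow_sub_one_div (hu : 0 < u) :
    HasDerivAt (fun u : ℝ => (exp (-σ * u ^ Y) - 1) / u)
      ((1 - exp (-σ * u ^ Y)) / u ^ 2 - σ * Y * (u ^ (Y - 2) * exp (-σ * u ^ Y))) u := by
  have h := ((((hasDerivAt_rpow_const (p := Y) (.inl hu.ne')).const_mul (-σ)).exp).sub_const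
    1).div (hasDerivAt_id u) hu.ne'
  refine h.congr_deriv ?_
  rw [rpow_sub_one hu.ne', rpow_sub hu, rpow_two, id]
  field_simp
  ring

lemma tendsto_exp_neg_mul_rpow_sub_one_div_atTop (hσ : 0 ≤ σ) :
    Tendsto (fun u : ℝ => (exp (-σ * u ^ Y) - 1) / u) atTop (𝓝 0) := by
  refine squeeze_zero_norm' ?_ tendsto_inv_atTop_zero
  filter_upwards [eventually_gt_atTop 0] with u hu
  rw [norm_exp_neg_mul_rpow_sub_one_div hσ hu, inv_eq_one_div]
  exact div_le_div_of_nonneg_right (by linarith [exp_pos (-σ * u ^ Y)]) hu.le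

lemma tendsto_exp_neg_mul_rpow_sub_one_div_nhdsGT_zero (hσ : 0 ≤ σ) (hY : 1 < Y) :
    Tendsto (fun u : ℝ => (exp (-σ * u ^ Y) - 1) / u) (𝓝[>] 0) (𝓝 0) := by
  have hlim : Tendsto (fun u : ℝ => σ * u ^ (Y - 1)) (𝓝[>] 0) (𝓝 0) := by
    simpa [zero_rpow (sub_pos.2 hY).ne'] using
      ((continuousAt_rpow_const 0 (Y - 1) (.inr (sub_pos.2 hY).le)).tendsto.mono_left
        nhdsWithin_le_nhds).const_mul σ
  refine squeeze_zero_norm' ?_ hlim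
  filter_upwards [self_mem_nhdsWithin] with u (hu : 0 < u)
  rw [norm_exp_neg_mul_rpow_sub_one_div hσ hu, rpow_sub_one hu.ne', ← mul_div_assoc]
  exact div_le_div_of_nonneg_right (one_sub_exp_neg_mul_rpow_le σ Y u) hu.le

lemma integral_rpow_sub_two_mul_exp_neg_mul_rpow (hσ : 0 < σ) (hY : 1 < Y) :
    ∫ u in Ioi (0 : ℝ), u ^ (Y - 2) * exp (-σ * u ^ Y) =
      σ ^ (1 / Y - 1) / Y * Gamma (1 - 1 / Y) := by
  have hY0 : Y ≠ 0 := by linarith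
  rw [integral_rpow_mul_exp_neg_mul_rpow (by linarith) (by linarith) hσ]
  have h1 : -(Y - 2 + 1) / Y = 1 / Y - 1 := by field_simp; ring
  have h2 : (Y - 2 + 1) / Y = 1 - 1 / Y := by field_simp; ring
  rw [h1, h2, mul_one_div]

theorem stmt0_general (σ Y : ℝ) (hσ : 0 < σ) (hY1 : 1 < Y) :
    IntegrableOn (fun u : ℝ => (1 - Real.exp (-σ * u ^ Y)) / u ^ 2) (Set.Ioi 0) ∧
    ∫ u in Set.Ioi (0 : ℝ), (1 - Real.exp (-σ * u ^ Y)) / u ^ 2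
      = σ ^ (1/Y) * Real.Gamma (1 - 1/Y) := by
  have hf := integrableOn_one_sub_exp_neg_mul_rpow_div_sq hσ.le hY1
  have hg := (integrableOn_rpow_mul_exp_neg_mul_rpow (s := Y - 2) (by linarith) (by linarith)
    hσ).const_mul (σ * Y)
  have hcont : ContinuousWithinAt (fun u : ℝ => (exp (-σ * u ^ Y) - 1) / u) (Ici 0) 0 :=
    continuousWithinAt_Ioi_iff_Ici.1 <| by
      simpa [ContinuousWithinAt] using tendsto_exp_neg_mul_rpow_sub_one_div_nhdsGT_zero hσ.le hY1
  have hparts := integral_Ioi_of_hasDerivAt_of_tendsto hcont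
    (fun u hu => hasDerivAt_exp_neg_mul_rpow_sub_one_div hu) (hf.sub hg)
    (tendsto_exp_neg_mul_rpow_sub_one_div_atTop hσ.le)
  rw [integral_sub hf hg, integral_const_mul, integral_rpow_sub_two_mul_exp_neg_mul_rpow hσ hY1,
    div_zero, sub_zero, sub_eq_zero] at hparts
  refine ⟨hf, hparts.trans ?_⟩
  rw [rpow_sub_one hσ.ne']
  field_simp

/-- For every real `σ > 0` and `Y ∈ (1,2)`, the improper integral
`∫₀^∞ (1 - exp(-σ·u^Y))/u² du` converges and equals `σ^(1/Y) · Γ(1 - 1/Y)`. -/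
theorem stmt0 (σ Y : ℝ) (hσ : 0 < σ) (hY1 : 1 < Y) (hY2 : Y < 2) :
    IntegrableOn (fun u : ℝ => (1 - Real.exp (-σ * u ^ Y)) / u ^ 2) (Set.Ioi 0) ∧
    ∫ u in Set.Ioi (0 : ℝ), (1 - Real.exp (-σ * u ^ Y)) / u ^ 2
      = σ ^ (1/Y) * Real.Gamma (1 - 1/Y) :=
  stmt0_general σ Y hσ hY1
end

section
/- With the CGMY data below, the function w ↦ ((w² + 1/4)·θ₀(w) - w²·Re ψ₀(w)) / (w²·(w² + 1/4)) is Lebesgue integrable on (0,∞); equivalently, the second-order coefficient d₂ is given by an absolutely convergent integral. -/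
open MeasureTheory Filter Topology Complex

/-- The stable scale coefficient `σ_Y = 2·C·Γ(-Y)·|cos(πY/2)|`. -/
noncomputable def sigmaY (C Y : ℝ) : ℝ :=
  2 * C * Real.Gamma (-Y) * |Real.cos (Real.pi * Y / 2)|

/-- The martingale drift `b̃`. -/
noncomputable def btilde (C G M Y : ℝ) : ℝ :=
  -(C * Real.Gamma (-Y) * ((M - 1) ^ Y + (G + 1) ^ Y - M ^ Y - G ^ Y))

/-- The constant `κ = b̃/2 - C·Γ(-Y)·(M^Y + G^Y)`. -/
noncomputable def kappaC (C G M Y : ℝ) : ℝ :=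
  btilde C G M Y / 2 - C * Real.Gamma (-Y) * (M ^ Y + G ^ Y)

/-- The limiting stable exponent `θ₀(u) = -σ_Y·|u|^Y`. -/
noncomputable def theta0 (C Y : ℝ) (u : ℝ) : ℝ :=
  -(sigmaY C Y) * |u| ^ Y

/-- The contour-shifted characteristic exponent `ψ₀`. -/
noncomputable def psi0 (C G M Y : ℝ) (v : ℝ) : ℂ :=
  Complex.I * (v : ℂ) * ((btilde C G M Y : ℝ) : ℂ) + ((kappaC C G M Y : ℝ) : ℂ)
    + ((C * Real.Gamma (-Y) : ℝ) : ℂ) *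
      ((((M - 1/2 : ℝ) : ℂ) - Complex.I * (v : ℂ)) ^ (Y : ℂ)
        + (((G + 1/2 : ℝ) : ℂ) + Complex.I * (v : ℂ)) ^ (Y : ℂ))

/-- The rescaled exponent `θ(t,v)` in the Lipton–Lewis representation. -/
noncomputable def thetaT (C G M Y : ℝ) (t v : ℝ) : ℂ :=
  Complex.I * (v : ℂ) * ((btilde C G M Y : ℝ) : ℂ) * ((t ^ (1 - 1/Y) : ℝ) : ℂ)
    + ((kappaC C G M Y : ℝ) : ℂ) * (t : ℂ)
    + ((C * Real.Gamma (-Y) : ℝ) : ℂ) *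
      (((((M - 1/2) * t ^ (1/Y) : ℝ) : ℂ) - Complex.I * (v : ℂ)) ^ (Y : ℂ)
        + ((((G + 1/2) * t ^ (1/Y) : ℝ) : ℂ) + Complex.I * (v : ℂ)) ^ (Y : ℂ))

/-- The normalized Lipton–Lewis ATM factor `L(t)`. -/
noncomputable def LLfn (C G M Y : ℝ) (t : ℝ) : ℝ :=
  (1 / Real.pi) *
    (∫ v in Set.Ioi (0 : ℝ),
      (1 - Complex.exp (thetaT C G M Y t v)) / (((v ^ 2 + t ^ (2/Y) / 4 : ℝ)) : ℂ)).re

/-- The first-order coefficient `d₁`. -/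
noncomputable def dOne (C Y : ℝ) : ℝ :=
  (1 / Real.pi) * Real.Gamma (1 - 1/Y) * (sigmaY C Y) ^ (1/Y)

/-- The second-order coefficient `d₂`. -/
noncomputable def dTwo (C G M Y : ℝ) : ℝ :=
  (1 / Real.pi) * ∫ w in Set.Ioi (0 : ℝ),
    ((w ^ 2 + 1/4) * theta0 C Y w - w ^ 2 * (psi0 C G M Y w).re) / (w ^ 2 * (w ^ 2 + 1/4))

/-! Split the integrand as `θ₀(w)/w² - Re ψ₀(w)/(w² + 1/4)`. Near `0` it is `O(w^(Y-2))`,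
because `θ₀(w) = -σ_Y w^Y` and `Re ψ₀` is continuous. Near `∞` the point is that `θ₀` is the
leading part of `Re ψ₀`: `Re((iv)^Y + (-iv)^Y) = 2 v^Y cos(πY/2)` with `cos(πY/2) ≤ 0`, so
`θ₀(v) = C Γ(-Y) Re((iv)^Y + (-iv)^Y)`, and by the mean value theorem moving the base of `z^Y`
by a real `a ≥ 0` changes it by `O(|z|^(Y-1))`. Hence `θ₀ - Re ψ₀ = O(w^(Y-1))` and the
integrand is `O(w^(Y-3))`, integrable at `∞` since `Y < 2`. -/

open Set

noncomputable def dTwoIntegrand (w a b : ℝ) : ℝ :=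
  ((w ^ 2 + 1/4) * a - w ^ 2 * b) / (w ^ 2 * (w ^ 2 + 1/4))

theorem integrableOn_Ioi_zero_of_norm_le_rpow {E : Type*} [NormedAddCommGroup E] {f : ℝ → E}
    {p q A B : ℝ} (hf : ContinuousOn f (Ioi 0)) (hp : -1 < p) (hq : q < -1)
    (h_zero : ∀ w ∈ Ioc (0 : ℝ) 1, ‖f w‖ ≤ A * w ^ p)
    (h_top : ∀ w ∈ Ioi (1 : ℝ), ‖f w‖ ≤ B * w ^ q) :
    IntegrableOn f (Ioi 0) := by
  rw [← Ioc_union_Ioi_eq_Ioi zero_le_one]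
  refine IntegrableOn.union ?_ ?_
  · have hg : IntegrableOn (fun w : ℝ => A * w ^ p) (Ioc 0 1) :=
      ((intervalIntegrable_iff_integrableOn_Ioc_of_le zero_le_one).1
        (intervalIntegral.intervalIntegrable_rpow' hp)).const_mul A
    exact hg.mono' ((hf.mono Ioc_subset_Ioi_self).aestronglyMeasurable measurableSet_Ioc)
      ((ae_restrict_iff' measurableSet_Ioc).2 (Eventually.of_forall h_zero))
  · have hg : IntegrableOn (fun w : ℝ => B * w ^ q) (Ioi 1) :=
      (integrableOn_Ioi_rpow_of_lt hq one_pos).const_mul B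
    exact hg.mono' ((hf.mono (Ioi_subset_Ioi zero_le_one)).aestronglyMeasurable
      measurableSet_Ioi) ((ae_restrict_iff' measurableSet_Ioi).2 (Eventually.of_forall h_top))

lemma abs_dTwoIntegrand_le_of_le_one {w a b A B Y : ℝ} (hw0 : 0 < w) (hw1 : w ≤ 1)
    (hY : Y ≤ 2) (ha : |a| ≤ A * w ^ Y) (hb : |b| ≤ B) :
    |dTwoIntegrand w a b| ≤ (A + 4 * B) * w ^ (Y - 2) := by
  have hsplit : dTwoIntegrand w a b = a / w ^ 2 - b / (w ^ 2 + 1/4) := by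
    unfold dTwoIntegrand
    field_simp
  have hpow : w ^ (Y - 2) = w ^ Y / w ^ 2 := by
    rw [Real.rpow_sub hw0, Real.rpow_two]
  have hone : 1 ≤ w ^ (Y - 2) :=
    Real.one_le_rpow_of_pos_of_le_one_of_nonpos hw0 hw1 (by linarith)
  calc _ = |a / w ^ 2 - b / (w ^ 2 + 1/4)| := by rw [hsplit]
    _ ≤ |a| / w ^ 2 + |b| / (w ^ 2 + 1/4) := by
      refine (abs_sub _ _).trans_eq ?_
      rw [abs_div, abs_div, abs_of_pos (by positivity : (0 : ℝ) < w ^ 2),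
        abs_of_pos (by positivity : (0 : ℝ) < w ^ 2 + 1/4)]
    _ ≤ A * w ^ (Y - 2) + 4 * B := by
      gcongr
      · rw [hpow, ← mul_div_assoc]
        gcongr
      · rw [div_le_iff₀ (by positivity)]
        nlinarith [abs_nonneg b]
    _ ≤ (A + 4 * B) * w ^ (Y - 2) := by nlinarith [abs_nonneg b]

lemma abs_dTwoIntegrand_le_of_one_le {w a b A K Y : ℝ} (hw : 1 ≤ w)
    (ha : |a| ≤ A * w ^ Y) (hab : |a - b| ≤ K * w ^ (Y - 1)) :
    |dTwoIntegrand w a b| ≤ (A + K) * w ^ (Y - 3) := by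
  have hw0 : 0 < w := by linarith
  have hsplit : dTwoIntegrand w a b
      = a / (4 * w ^ 2 * (w ^ 2 + 1/4)) + (a - b) / (w ^ 2 + 1/4) := by
    unfold dTwoIntegrand
    field_simp
    ring
  have hcube : w ^ 3 ≤ 4 * w ^ 2 * (w ^ 2 + 1/4) := by nlinarith [pow_pos hw0 3]
  calc _ ≤ |a| / (4 * w ^ 2 * (w ^ 2 + 1/4)) + |a - b| / (w ^ 2 + 1/4) := by
        rw [hsplit]
        refine (abs_add_le _ _).trans_eq ?_
        rw [abs_div, abs_div, abs_of_pos (by positivity : (0 : ℝ) < w ^ 2 + 1/4),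
          abs_of_pos (by positivity : (0 : ℝ) < 4 * w ^ 2 * (w ^ 2 + 1/4))]
    _ ≤ A * w ^ Y / w ^ 3 + K * w ^ (Y - 1) / w ^ 2 := by
      gcongr
      · exact (abs_nonneg _).trans ha
      · exact (abs_nonneg _).trans hab
      · linarith
    _ = (A + K) * w ^ (Y - 3) := by
      have hY : w ^ Y = w ^ (Y - 3) * w ^ 3 := by
        rw [← Real.rpow_add_natCast hw0.ne']; norm_num
      have hY1 : w ^ (Y - 1) = w ^ (Y - 3) * w ^ 2 := by
        rw [← Real.rpow_add_natCast hw0.ne']; ring_nf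
      rw [hY, hY1]
      field_simp

lemma re_cpow_I_mul_add_re_cpow_neg_I_mul (Y : ℝ) {v : ℝ} (hv : 0 < v) :
    ((I * v) ^ (Y : ℂ)).re + ((-(I * v)) ^ (Y : ℂ)).re =
      2 * v ^ Y * Real.cos (Real.pi * Y / 2) := by
  have hI : I * v = (v : ℂ) * I := mul_comm _ _
  have hnegI : -(I * v) = (v : ℂ) * (-I) := by ring
  rw [cpow_ofReal_re, cpow_ofReal_re, hnegI, hI, arg_real_mul _ hv, arg_real_mul _ hv, arg_I,
    arg_neg_I, norm_mul, norm_mul, norm_neg, norm_I, norm_real, Real.norm_of_nonneg hv.le,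
    neg_mul, Real.cos_neg]
  ring_nf

lemma theta0_eq_re_cpow (C : ℝ) {Y v : ℝ} (hcos : Real.cos (Real.pi * Y / 2) ≤ 0)
    (hv : 0 < v) :
    theta0 C Y v =
      C * Real.Gamma (-Y) * (((I * v) ^ (Y : ℂ)).re + ((-(I * v)) ^ (Y : ℂ)).re) := by
  rw [re_cpow_I_mul_add_re_cpow_neg_I_mul Y hv, theta0, sigmaY, abs_of_nonpos hcos,
    abs_of_pos hv]
  ring

lemma abs_theta0_of_nonneg (C Y : ℝ) {u : ℝ} (hu : 0 ≤ u) :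
    |theta0 C Y u| = |sigmaY C Y| * u ^ Y := by
  rw [theta0, abs_mul, abs_neg, abs_of_nonneg hu, abs_of_nonneg (Real.rpow_nonneg hu Y)]

lemma continuous_theta0 (C : ℝ) {Y : ℝ} (hY : 0 ≤ Y) : Continuous (theta0 C Y) :=
  continuous_const.mul (continuous_abs.rpow_const fun _ => Or.inr hY)

lemma continuous_psi0 (C Y : ℝ) {G M : ℝ} (hG : -1/2 < G) (hM : 1/2 < M) :
    Continuous (psi0 C G M Y) := by
  have hslit : ∀ (a : ℝ) (z : ℂ), 0 < a → z.re = 0 → (a : ℂ) + z ∈ slitPlane :=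
    fun a z ha hz => mem_slitPlane_iff.2 (Or.inl (by simpa [hz] using ha))
  unfold psi0
  refine (by fun_prop : Continuous fun v : ℝ => I * v * _ + _).add (continuous_const.mul ?_)
  refine .add (.cpow (by fun_prop) continuous_const fun v => ?_)
    (.cpow (by fun_prop) continuous_const fun v => ?_)
  · rw [sub_eq_add_neg]
    exact hslit _ _ (by linarith) (by simp)
  · exact hslit _ _ (by linarith) (by simp)

lemma norm_ofReal_add_cpow_sub_cpow_le {Y a : ℝ} (hY : 1 ≤ Y) (ha : 0 ≤ a) {z : ℂ}
    (hz : z.im ≠ 0) :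
    ‖((a : ℂ) + z) ^ (Y : ℂ) - z ^ (Y : ℂ)‖ ≤ Y * a * (a + ‖z‖) ^ (Y - 1) := by
  have hderiv (t : ℝ) : HasDerivAt (fun s : ℝ => ((s : ℂ) + z) ^ (Y : ℂ))
      ((Y : ℂ) * ((t : ℂ) + z) ^ ((Y : ℂ) - 1)) t := by
    have hslit : (t : ℂ) + z ∈ slitPlane := mem_slitPlane_iff.2 (Or.inr (by simpa using hz))
    simpa using (((hasDerivAt_id (t : ℂ)).add_const z).cpow_const hslit).comp_ofReal
  have hbound : ∀ t ∈ Ico 0 a,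
      ‖(Y : ℂ) * ((t : ℂ) + z) ^ ((Y : ℂ) - 1)‖ ≤ Y * (a + ‖z‖) ^ (Y - 1) := by
    intro t ht
    have hnorm : ‖(t : ℂ) + z‖ ≤ a + ‖z‖ := by
      refine (norm_add_le _ _).trans ?_
      rw [norm_real, Real.norm_of_nonneg ht.1]
      linarith [ht.2]
    rw [norm_mul, show (Y : ℂ) - 1 = ((Y - 1 : ℝ) : ℂ) by push_cast; ring, norm_cpow_real,
      norm_real, Real.norm_of_nonneg (by linarith)]
    gcongr
  have hmvt := norm_image_sub_le_of_norm_deriv_le_segment'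
    (fun t _ => (hderiv t).hasDerivWithinAt) hbound a ⟨ha, le_rfl⟩
  simp only [ofReal_zero, zero_add, sub_zero] at hmvt
  linarith

lemma norm_ofReal_add_cpow_sub_cpow_le_mul_rpow {Y a : ℝ} (hY : 1 ≤ Y) (ha : 0 ≤ a) {z : ℂ}
    (hz : z.im ≠ 0) (hz1 : 1 ≤ ‖z‖) :
    ‖((a : ℂ) + z) ^ (Y : ℂ) - z ^ (Y : ℂ)‖ ≤
      Y * a * (a + 1) ^ (Y - 1) * ‖z‖ ^ (Y - 1) := by
  have hsplit : (a + ‖z‖) ^ (Y - 1) ≤ (a + 1) ^ (Y - 1) * ‖z‖ ^ (Y - 1) := by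
    rw [← Real.mul_rpow (by linarith) (by positivity)]
    exact Real.rpow_le_rpow (by positivity) (by nlinarith) (by linarith)
  refine (norm_ofReal_add_cpow_sub_cpow_le hY ha hz).trans ?_
  rw [mul_assoc (Y * a)]
  gcongr

lemma theta0_sub_re_psi0 (C G M : ℝ) {Y v : ℝ} (hcos : Real.cos (Real.pi * Y / 2) ≤ 0)
    (hv : 0 < v) :
    theta0 C Y v - (psi0 C G M Y v).re = -kappaC C G M Y - C * Real.Gamma (-Y) *
      (((((M - 1/2 : ℝ) : ℂ) + -(I * v)) ^ (Y : ℂ) - (-(I * v)) ^ (Y : ℂ))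
        + ((((G + 1/2 : ℝ) : ℂ) + I * v) ^ (Y : ℂ) - (I * v) ^ (Y : ℂ))).re := by
  rw [theta0_eq_re_cpow C hcos hv, psi0, ← sub_eq_add_neg]
  simp only [add_re, sub_re, mul_re, I_re, I_im, ofReal_re, ofReal_im]
  ring

lemma exists_abs_theta0_sub_re_psi0_le (C : ℝ) {G M Y : ℝ} (hG : -1/2 ≤ G) (hM : 1/2 ≤ M)
    (hY : 1 ≤ Y) (hcos : Real.cos (Real.pi * Y / 2) ≤ 0) :
    ∃ K, ∀ v, 1 ≤ v → |theta0 C Y v - (psi0 C G M Y v).re| ≤ K * v ^ (Y - 1) := by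
  refine ⟨|kappaC C G M Y| + |C * Real.Gamma (-Y)| *
    (Y * (M - 1/2) * (M - 1/2 + 1) ^ (Y - 1) + Y * (G + 1/2) * (G + 1/2 + 1) ^ (Y - 1)),
    fun v hv => ?_⟩
  have hv0 : 0 < v := by linarith
  have hnorm : ‖I * v‖ = v := by
    rw [norm_mul, norm_I, norm_real, Real.norm_of_nonneg hv0.le, one_mul]
  have him : (I * v).im ≠ 0 := by simpa using hv0.ne'
  have hM' := norm_ofReal_add_cpow_sub_cpow_le_mul_rpow hY (a := M - 1/2) (by linarith)
    (z := -(I * v)) (by simpa using him) (by rwa [norm_neg, hnorm])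
  have hG' := norm_ofReal_add_cpow_sub_cpow_le_mul_rpow hY (a := G + 1/2) (by linarith)
    (z := I * v) him (by rwa [hnorm])
  rw [norm_neg, hnorm] at hM'
  rw [hnorm] at hG'
  have hone : 1 ≤ v ^ (Y - 1) := Real.one_le_rpow hv (by linarith)
  rw [theta0_sub_re_psi0 C G M hcos hv0]
  set D₁ := (((M - 1/2 : ℝ) : ℂ) + -(I * v)) ^ (Y : ℂ) - (-(I * v)) ^ (Y : ℂ)
  set D₂ := (((G + 1/2 : ℝ) : ℂ) + I * v) ^ (Y : ℂ) - (I * v) ^ (Y : ℂ)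
  calc _ ≤ |kappaC C G M Y| + |C * Real.Gamma (-Y)| * (‖D₁‖ + ‖D₂‖) := by
        refine (abs_sub _ _).trans (add_le_add (abs_neg _).le ?_)
        rw [abs_mul]
        gcongr
        exact (abs_re_le_norm _).trans (norm_add_le _ _)
    _ ≤ |kappaC C G M Y| * v ^ (Y - 1) + |C * Real.Gamma (-Y)| *
        (Y * (M - 1/2) * (M - 1/2 + 1) ^ (Y - 1) * v ^ (Y - 1)
          + Y * (G + 1/2) * (G + 1/2 + 1) ^ (Y - 1) * v ^ (Y - 1)) := by
      gcongr
      exact le_mul_of_one_le_right (abs_nonneg _) hone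
    _ = _ := by ring

theorem stmt3_general (C G M Y : ℝ) (hG : 0 ≤ G) (hM : 1 < M)
    (hY1 : 1 < Y) (hY2 : Y < 2) :
    IntegrableOn
      (fun w : ℝ =>
        ((w ^ 2 + 1/4) * theta0 C Y w - w ^ 2 * (psi0 C G M Y w).re) /
          (w ^ 2 * (w ^ 2 + 1/4)))
      (Set.Ioi 0) := by
  have hcos : Real.cos (Real.pi * Y / 2) ≤ 0 :=
    Real.cos_nonpos_of_pi_div_two_le_of_le (by nlinarith [Real.pi_pos])
      (by nlinarith [Real.pi_pos])
  have hθ := continuous_theta0 C (by linarith : 0 ≤ Y)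
  have hψ := continuous_re.comp
    (continuous_psi0 C Y (by linarith : -1/2 < G) (by linarith : 1/2 < M))
  obtain ⟨R, hR⟩ := isCompact_Icc.exists_bound_of_continuousOn (hψ.continuousOn (s := Icc 0 1))
  obtain ⟨K, hK⟩ :=
    exists_abs_theta0_sub_re_psi0_le C (by linarith : -1/2 ≤ G) (by linarith : 1/2 ≤ M) hY1.le
      hcos
  refine integrableOn_Ioi_zero_of_norm_le_rpow (p := Y - 2) (q := Y - 3)
    (A := |sigmaY C Y| + 4 * R) (B := |sigmaY C Y| + K) ?_ (by linarith) (by linarith)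
    (fun w hw => ?_) (fun w hw => ?_)
  · refine (by fun_prop : Continuous fun w : ℝ =>
      (w ^ 2 + 1/4) * theta0 C Y w - w ^ 2 * (psi0 C G M Y w).re).continuousOn.div
      (by fun_prop) fun w hw => ?_
    have : (0 : ℝ) < w := hw
    positivity
  · exact abs_dTwoIntegrand_le_of_le_one hw.1 hw.2 hY2.le (abs_theta0_of_nonneg C Y hw.1.le).le
      (hR w (Ioc_subset_Icc_self hw))
  · exact abs_dTwoIntegrand_le_of_one_le (le_of_lt hw)
      (abs_theta0_of_nonneg C Y (by linarith [mem_Ioi.1 hw])).le (hK w (le_of_lt hw))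

/-- The integrand defining the second-order coefficient `d₂` is Lebesgue
integrable on `(0,∞)`. -/
theorem stmt3 (C G M Y : ℝ) (hC : 0 < C) (hG : 0 ≤ G) (hM : 1 < M)
    (hY1 : 1 < Y) (hY2 : Y < 2) :
    IntegrableOn
      (fun w : ℝ =>
        ((w ^ 2 + 1/4) * theta0 C Y w - w ^ 2 * (psi0 C G M Y w).re) /
          (w ^ 2 * (w ^ 2 + 1/4)))
      (Set.Ioi 0) :=
  stmt3_general C G M Y hG hM hY1 hY2
end

section
/- With the CGMY data below, lim_{v→∞} Re ψ₀(v) / v^Y = -σ_Y. In particular, Re ψ₀(v) is negative for all sufficiently large v. -/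
open MeasureTheory Filter Topology Complex

lemma aux_tendsto (Y a : ℝ) (s : ℂ) (hs : s.im ≠ 0) :
    Tendsto (fun v : ℝ => (((a : ℂ) + s * v) ^ (Y : ℂ)).re / v ^ Y) atTop
      (𝓝 ((s ^ (Y : ℂ)).re)) := by
  have hcont : ContinuousAt (fun z : ℂ => (z ^ (Y : ℂ)).re) s :=
    Complex.continuous_re.continuousAt.comp
      (continuousAt_cpow_const (Complex.mem_slitPlane_iff.2 (Or.inr hs)))
  have h0 : Tendsto (fun v : ℝ => (((a / v : ℝ) : ℂ) + s)) atTop (𝓝 s) := by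
    have : Tendsto (fun v : ℝ => (a / v : ℝ)) atTop (𝓝 0) :=
      tendsto_const_nhds.div_atTop tendsto_id
    have := (Complex.continuous_ofReal.continuousAt.tendsto.comp this).add
      (tendsto_const_nhds (x := s))
    simpa using this
  have hg : Tendsto (fun v : ℝ => (((((a / v : ℝ) : ℂ) + s) ^ (Y : ℂ)).re)) atTop
      (𝓝 ((s ^ (Y : ℂ)).re)) := hcont.tendsto.comp h0
  refine Tendsto.congr' ?_ hg
  filter_upwards [eventually_gt_atTop (0 : ℝ)] with v hv
  have hvc : (v : ℂ) ≠ 0 := by exact_mod_cast hv.ne'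
  have hz : ((a / v : ℝ) : ℂ) + s ≠ 0 := by
    intro h
    apply hs
    have := congrArg Complex.im h
    simpa using this
  have hfac : (a : ℂ) + s * v = (v : ℂ) * (((a / v : ℝ) : ℂ) + s) := by
    push_cast
    field_simp
  have hmul : ((v : ℂ) * (((a / v : ℝ) : ℂ) + s)) ^ (Y : ℂ)
      = (v : ℂ) ^ (Y : ℂ) * (((a / v : ℝ) : ℂ) + s) ^ (Y : ℂ) := by
    rw [Complex.cpow_def_of_ne_zero (mul_ne_zero hvc hz),
      Complex.cpow_def_of_ne_zero hvc, Complex.cpow_def_of_ne_zero hz,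
      Complex.log_ofReal_mul hv hz, add_mul, Complex.exp_add, Complex.ofReal_log hv.le]
  rw [hfac, hmul, ← Complex.ofReal_cpow hv.le, Complex.re_ofReal_mul,
    mul_div_cancel_left₀ _ (Real.rpow_pos_of_pos hv Y).ne']

lemma aux_I_re (Y : ℝ) : ((Complex.I) ^ (Y:ℂ)).re = Real.cos (Real.pi * Y / 2) := by
  rw [Complex.cpow_def_of_ne_zero Complex.I_ne_zero, Complex.log_I,
    show ((Real.pi:ℂ) / 2 * Complex.I) * (Y:ℂ) = ((Y * Real.pi / 2 : ℝ) : ℂ) * Complex.I by push_cast; ring,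
    Complex.exp_ofReal_mul_I_re]
  ring_nf

lemma aux_negI_re (Y : ℝ) : ((-Complex.I) ^ (Y:ℂ)).re = Real.cos (Real.pi * Y / 2) := by
  rw [Complex.cpow_def_of_ne_zero (by simp : (-Complex.I) ≠ 0), Complex.log_neg_I,
    show (-((Real.pi:ℂ) / 2) * Complex.I) * (Y:ℂ) = ((-(Y * Real.pi / 2) : ℝ) : ℂ) * Complex.I by push_cast; ring,
    Complex.exp_ofReal_mul_I_re, Real.cos_neg]
  ring_nf

lemma aux_Gamma_neg_pos {Y : ℝ} (hY1 : 1 < Y) (hY2 : Y < 2) : 0 < Real.Gamma (-Y) := by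
  have e1 : Real.Gamma (-Y + 1) = -Y * Real.Gamma (-Y) :=
    Real.Gamma_add_one (by intro h; nlinarith)
  have e2 : Real.Gamma (-Y + 1 + 1) = (-Y + 1) * Real.Gamma (-Y + 1) :=
    Real.Gamma_add_one (by intro h; nlinarith)
  have hpos : 0 < Real.Gamma (-Y + 1 + 1) := Real.Gamma_pos_of_pos (by linarith)
  rw [e2, e1] at hpos
  have h3 : 0 < (Y - 1) * Y * Real.Gamma (-Y) := by nlinarith [hpos]
  have hYY : (0:ℝ) < (Y - 1) * Y := by nlinarith
  by_contra h
  push_neg at h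
  nlinarith [mul_nonneg hYY.le (neg_nonneg.2 h)]

/-- `Re ψ₀(v)/v^Y → -σ_Y` as `v → ∞`; in particular `Re ψ₀(v) < 0` for all
sufficiently large `v`. -/
theorem stmt4 (C G M Y : ℝ) (hC : 0 < C) (hG : 0 ≤ G) (hM : 1 < M)
    (hY1 : 1 < Y) (hY2 : Y < 2) :
    Tendsto (fun v : ℝ => (psi0 C G M Y v).re / v ^ Y) atTop (𝓝 (-(sigmaY C Y))) ∧
    ∀ᶠ v in atTop, (psi0 C G M Y v).re < 0 := by
  have hpi := Real.pi_pos
  have hcos : Real.cos (Real.pi * Y / 2) < 0 :=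
    Real.cos_neg_of_pi_div_two_lt_of_lt (by nlinarith) (by nlinarith)
  have hGam : 0 < Real.Gamma (-Y) := aux_Gamma_neg_pos hY1 hY2
  have hsig : sigmaY C Y = -(2 * C * Real.Gamma (-Y) * Real.cos (Real.pi * Y / 2)) := by
    rw [sigmaY, abs_of_neg hcos]; ring
  have hsigpos : 0 < sigmaY C Y := by
    rw [hsig]
    nlinarith [mul_pos (mul_pos hC hGam) (neg_pos.2 hcos)]
  have hA : Tendsto (fun v : ℝ =>
      (((((M - 1/2 : ℝ) : ℂ)) - Complex.I * (v : ℂ)) ^ (Y : ℂ)).re / v ^ Y) atTop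
      (𝓝 (Real.cos (Real.pi * Y / 2))) := by
    have := aux_tendsto Y (M - 1/2) (-Complex.I) (by simp)
    rw [aux_negI_re] at this
    simpa only [neg_mul, ← sub_eq_add_neg] using this
  have hB : Tendsto (fun v : ℝ =>
      (((((G + 1/2 : ℝ) : ℂ)) + Complex.I * (v : ℂ)) ^ (Y : ℂ)).re / v ^ Y) atTop
      (𝓝 (Real.cos (Real.pi * Y / 2))) := by
    have := aux_tendsto Y (G + 1/2) Complex.I (by simp)
    rw [aux_I_re] at this
    exact this
  have hre : ∀ v : ℝ, (psi0 C G M Y v).re = kappaC C G M Y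
      + C * Real.Gamma (-Y) *
        (((((M - 1/2 : ℝ) : ℂ) - Complex.I * (v : ℂ)) ^ (Y : ℂ)).re
          + ((((G + 1/2 : ℝ) : ℂ) + Complex.I * (v : ℂ)) ^ (Y : ℂ)).re) := by
    intro v
    simp [psi0, Complex.add_re, Complex.re_ofReal_mul, Complex.mul_re,
      Complex.I_re, Complex.I_im, Complex.ofReal_re, Complex.ofReal_im]
  have h0 : Tendsto (fun v : ℝ => kappaC C G M Y / v ^ Y) atTop (𝓝 0) :=
    tendsto_const_nhds.div_atTop (tendsto_rpow_atTop (by linarith))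
  have htot := h0.add (((hA.add hB)).const_mul (C * Real.Gamma (-Y)))
  have hlim : Tendsto (fun v : ℝ => (psi0 C G M Y v).re / v ^ Y) atTop
      (𝓝 (-(sigmaY C Y))) := by
    have heq : (0 : ℝ) + C * Real.Gamma (-Y) *
        (Real.cos (Real.pi * Y / 2) + Real.cos (Real.pi * Y / 2)) = -(sigmaY C Y) := by
      rw [hsig]; ring
    rw [heq] at htot
    refine htot.congr fun v => ?_
    rw [hre v]; ring
  refine ⟨hlim, ?_⟩
  have hev := hlim.eventually_lt_const (neg_lt_zero.mpr hsigpos)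
  filter_upwards [hev, eventually_gt_atTop (0 : ℝ)] with v h1 h2
  have hd : 0 < v ^ Y := Real.rpow_pos_of_pos h2 Y
  have := mul_neg_of_neg_of_pos h1 hd
  rwa [div_mul_cancel₀ _ hd.ne'] at this
end

section
/- For every real λ > 0, every real Y > 0, and every real α ∈ (-1,0), the improper integral ∫₀^∞ (1 - exp(-λ·u^Y))·u^{αY - 1} du converges and equals -(1/Y)·λ^{-α}·Γ(α), where Γ is the real Gamma function (which is finite and negative for α ∈ (-1,0)). -/
/-!
The substitution `t = u ^ Y` reduces the integral to the case `Y = 1`. There, integrating by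
parts against `d(t ^ α)` gives
`α ∫₀^∞ (1 - e^{-λt}) t^{α-1} dt = -λ ∫₀^∞ e^{-λt} t^α dt = -λ^{-α} Γ(α + 1) = -α λ^{-α} Γ(α)`;
the boundary terms vanish because `0 ≤ 1 - e^{-λt} ≤ λt` and `-1 < α < 0`.
-/

open MeasureTheory Set Filter Real Topology

theorem rpow_sub_one_mul_rpow_rpow_sub_one {x : ℝ} (hx : 0 < x) (p s : ℝ) :
    x ^ (p - 1) * (x ^ p) ^ (s - 1) = x ^ (s * p - 1) := by
  rw [← rpow_mul hx.le, ← rpow_add hx]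
  ring_nf

theorem integrableOn_Ioi_comp_rpow_mul_rpow_iff (f : ℝ → ℝ) {p : ℝ} (hp : p ≠ 0) (s : ℝ) :
    IntegrableOn (fun x => f (x ^ p) * x ^ (s * p - 1)) (Ioi 0) ↔
      IntegrableOn (fun t => f t * t ^ (s - 1)) (Ioi 0) := by
  rw [← integrableOn_Ioi_comp_rpow_iff' (fun t => f t * t ^ (s - 1)) hp]
  refine integrableOn_congr_fun (fun x (hx : 0 < x) => ?_) measurableSet_Ioi
  rw [smul_eq_mul, mul_left_comm, rpow_sub_one_mul_rpow_rpow_sub_one hx]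

theorem integral_Ioi_comp_rpow_mul_rpow (f : ℝ → ℝ) {p : ℝ} (hp : p ≠ 0) (s : ℝ) :
    ∫ x in Ioi 0, f (x ^ p) * x ^ (s * p - 1) = |p|⁻¹ * ∫ t in Ioi 0, f t * t ^ (s - 1) := by
  rw [eq_inv_mul_iff_mul_eq₀ (abs_ne_zero.2 hp), ← integral_const_mul,
    ← integral_comp_rpow_Ioi (fun t => f t * t ^ (s - 1)) hp]
  refine setIntegral_congr_fun measurableSet_Ioi (fun x (hx : 0 < x) => ?_)
  rw [smul_eq_mul, ← rpow_sub_one_mul_rpow_rpow_sub_one hx]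
  ring

theorem one_sub_exp_neg_mul_nonneg {lam t : ℝ} (hlam : 0 ≤ lam) (ht : 0 ≤ t) :
    0 ≤ 1 - exp (-lam * t) := by
  have : exp (-lam * t) ≤ 1 := exp_le_one_iff.2 (by nlinarith)
  linarith

theorem one_sub_exp_neg_mul_le (lam t : ℝ) : 1 - exp (-lam * t) ≤ lam * t := by
  rw [neg_mul]
  linarith [one_sub_le_exp_neg (lam * t)]

theorem integrableOn_one_sub_exp_neg_mul_mul_rpow {lam α : ℝ} (hlam : 0 ≤ lam) (hα1 : -1 < α)
    (hα2 : α < 0) :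
    IntegrableOn (fun t => (1 - exp (-lam * t)) * t ^ (α - 1)) (Ioi 0) := by
  have hmeas : AEStronglyMeasurable (fun t : ℝ => (1 - exp (-lam * t)) * t ^ (α - 1)) :=
    (by fun_prop : Measurable _).aestronglyMeasurable
  have hnorm : ∀ t : ℝ, 0 < t →
      ‖(1 - exp (-lam * t)) * t ^ (α - 1)‖ = (1 - exp (-lam * t)) * t ^ (α - 1) := fun t ht =>
    norm_of_nonneg (mul_nonneg (one_sub_exp_neg_mul_nonneg hlam ht.le) (by positivity))
  rw [← Ioc_union_Ioi_eq_Ioi zero_le_one]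
  refine IntegrableOn.union ?_ ?_
  · refine ((intervalIntegral.intervalIntegrable_rpow' hα1).1.const_mul lam).mono' hmeas.restrict
      ((ae_restrict_mem measurableSet_Ioc).mono fun t ht => ?_)
    rw [hnorm t ht.1]
    calc (1 - exp (-lam * t)) * t ^ (α - 1) ≤ lam * t * t ^ (α - 1) :=
          mul_le_mul_of_nonneg_right (one_sub_exp_neg_mul_le lam t) (rpow_pos_of_pos ht.1 _).le
      _ = lam * t ^ α := by have := ht.1.ne'; rw [rpow_sub_one this]; field_simp
  · refine (integrableOn_Ioi_rpow_of_lt (a := α - 1) (by linarith) one_pos).mono' hmeas.restrict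
      ((ae_restrict_mem measurableSet_Ioi).mono fun t (ht : 1 < t) => ?_)
    rw [hnorm t (one_pos.trans ht)]
    exact mul_le_of_le_one_left (by positivity) (by linarith [exp_pos (-lam * t)])

theorem tendsto_one_sub_exp_neg_mul_mul_rpow_nhdsGT_zero {lam α : ℝ} (hlam : 0 ≤ lam)
    (hα : -1 < α) :
    Tendsto (fun t => (1 - exp (-lam * t)) * t ^ α) (𝓝[>] 0) (𝓝 0) := by
  have hbound : ∀ t ∈ Ioi (0 : ℝ), (1 - exp (-lam * t)) * t ^ α ≤ lam * t ^ (α + 1) :=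
    fun t ht => by
      rw [rpow_add_one (ne_of_gt ht), ← mul_assoc, mul_right_comm]
      exact mul_le_mul_of_nonneg_right (one_sub_exp_neg_mul_le lam t) (rpow_pos_of_pos ht _).le
  have hlim : Tendsto (fun t : ℝ => lam * t ^ (α + 1)) (𝓝[>] 0) (𝓝 0) := by
    refine tendsto_nhdsWithin_of_tendsto_nhds ?_
    have := (continuousAt_rpow_const 0 (α + 1) (Or.inr (by linarith))).tendsto.const_mul lam
    rwa [zero_rpow (by linarith), mul_zero] at this
  refine squeeze_zero' (eventually_nhdsWithin_of_forall fun t ht => ?_)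
    (eventually_nhdsWithin_of_forall hbound) hlim
  exact mul_nonneg (one_sub_exp_neg_mul_nonneg hlam (le_of_lt ht)) (rpow_pos_of_pos ht _).le

theorem tendsto_one_sub_exp_neg_mul_mul_rpow_atTop {lam α : ℝ} (hlam : 0 < lam) (hα : α < 0) :
    Tendsto (fun t => (1 - exp (-lam * t)) * t ^ α) atTop (𝓝 0) := by
  have hu : Tendsto (fun t => 1 - exp (-lam * t)) atTop (𝓝 1) := by
    simpa using tendsto_const_nhds.sub
      (tendsto_exp_atBot.comp (tendsto_id.const_mul_atTop_of_neg (neg_neg_of_pos hlam)))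
  have hv : Tendsto (fun t : ℝ => t ^ α) atTop (𝓝 0) := by
    simpa using tendsto_rpow_neg_atTop (neg_pos.2 hα)
  simpa using hu.mul hv

theorem integral_one_sub_exp_neg_mul_mul_rpow {lam α : ℝ} (hlam : 0 < lam) (hα1 : -1 < α)
    (hα2 : α < 0) :
    ∫ t in Ioi 0, (1 - exp (-lam * t)) * t ^ (α - 1) = -lam ^ (-α) * Gamma α := by
  have hu : ∀ t ∈ Ioi (0 : ℝ),
      HasDerivAt (fun t => 1 - exp (-lam * t)) (lam * exp (-lam * t)) t := fun t _ =>
    (((hasDerivAt_id t).const_mul (-lam)).exp.const_sub 1).congr_deriv (by simp; ring)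
  have hv : ∀ t ∈ Ioi (0 : ℝ), HasDerivAt (fun t => t ^ α) (α * t ^ (α - 1)) t :=
    fun t ht => hasDerivAt_rpow_const (Or.inl (ne_of_gt ht))
  have huv' : IntegrableOn (fun t => (1 - exp (-lam * t)) * (α * t ^ (α - 1))) (Ioi 0) :=
    IntegrableOn.congr_fun
      ((integrableOn_one_sub_exp_neg_mul_mul_rpow hlam.le hα1 hα2).const_mul α)
      (fun _ _ => mul_left_comm _ _ _) measurableSet_Ioi
  have hu'v : IntegrableOn (fun t => lam * exp (-lam * t) * t ^ α) (Ioi 0) :=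
    IntegrableOn.congr_fun
      ((integrableOn_rpow_mul_exp_neg_mul_rpow hα1 one_pos hlam).const_mul lam)
      (fun t _ => by rw [rpow_one]; ring) measurableSet_Ioi
  have hibp := integral_Ioi_mul_deriv_eq_deriv_mul hu hv huv' hu'v
    (tendsto_one_sub_exp_neg_mul_mul_rpow_nhdsGT_zero hlam.le hα1)
    (tendsto_one_sub_exp_neg_mul_mul_rpow_atTop hlam hα2)
  have hleft : ∫ t in Ioi 0, (1 - exp (-lam * t)) * (α * t ^ (α - 1))
      = α * ∫ t in Ioi 0, (1 - exp (-lam * t)) * t ^ (α - 1) := by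
    simp only [← integral_const_mul, mul_left_comm α]
  have hright : ∫ t in Ioi 0, lam * exp (-lam * t) * t ^ α
      = lam * (1 / lam) ^ (α + 1) * Gamma (α + 1) := by
    rw [mul_assoc, ← integral_rpow_mul_exp_neg_mul_Ioi (by linarith) hlam, ← integral_const_mul]
    congr with t
    rw [add_sub_cancel_right, neg_mul]
    ring
  have hpow : lam * (1 / lam) ^ (α + 1) = lam ^ (-α) := by
    rw [one_div, inv_rpow hlam.le, ← rpow_neg hlam.le, neg_add, rpow_add hlam, rpow_neg_one]
    field_simp
  rw [hleft, hright, Gamma_add_one hα2.ne, sub_self, zero_sub] at hibp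
  apply mul_left_cancel₀ hα2.ne
  rw [hibp, ← hpow]
  ring

/-- For `λ > 0`, `Y > 0`, `α ∈ (-1,0)`, the improper integral
`∫₀^∞ (1 - exp(-λ·u^Y))·u^{αY-1} du` converges and equals
`-(1/Y)·λ^{-α}·Γ(α)`. -/
theorem stmt8 (lam Y α : ℝ) (hlam : 0 < lam) (hY : 0 < Y)
    (hα1 : -1 < α) (hα2 : α < 0) :
    IntegrableOn (fun u : ℝ => (1 - Real.exp (-lam * u ^ Y)) * u ^ (α * Y - 1))
      (Set.Ioi 0) ∧
    ∫ u in Set.Ioi (0 : ℝ), (1 - Real.exp (-lam * u ^ Y)) * u ^ (α * Y - 1)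
      = -(1/Y) * lam ^ (-α) * Real.Gamma α := by
  refine ⟨(integrableOn_Ioi_comp_rpow_mul_rpow_iff (fun t => 1 - exp (-lam * t)) hY.ne' α).2
    (integrableOn_one_sub_exp_neg_mul_mul_rpow hlam.le hα1 hα2), ?_⟩
  rw [integral_Ioi_comp_rpow_mul_rpow (fun t => 1 - exp (-lam * t)) hY.ne',
    integral_one_sub_exp_neg_mul_mul_rpow hlam hα1 hα2, abs_of_pos hY]
  ring
end

section
/- With the CGMY data below, define for t > 0 the Laplace-type integral L₂₁(t) := (b̃²·t²/(2π))·∫₀^∞ w²·exp(-σ_Y·t·w^Y)/(w² + 1/4) dw. Then lim_{t→0⁺} L₂₁(t)/t^{2 - 1/Y} = a₂₁, where a₂₁ := b̃²·σ_Y^{-1/Y}·Γ(1/Y)/(2·π·Y). -/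
open MeasureTheory Filter Topology Complex

/-!
Substituting `w = u / t^{1/Y}` turns `L₂₁(t) / t^{2-1/Y}` into
`b̃²/(2π) · ∫₀^∞ u²/(u² + t^{2/Y}/4) · exp(-σ_Y u^Y) du`. The weight `u²/(u² + a)` lies in `[0, 1]`
and tends to `1` as `a → 0⁺`, so by dominated convergence the integral tends to
`∫₀^∞ exp(-σ_Y u^Y) du = σ_Y^{-1/Y} Γ(1/Y) / Y`. This needs `σ_Y > 0`, which holds because
`Γ(-Y) > 0` and `cos(πY/2) < 0` for `Y ∈ (1, 2)`.
-/

open Set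

lemma Real.Gamma_pos_of_neg_two_lt_of_lt_neg_one {s : ℝ} (h2 : -2 < s) (h1 : s < -1) :
    0 < Real.Gamma s := by
  have hstep : Real.Gamma (s + 2) = (s + 1) * s * Real.Gamma s := by
    rw [show s + 2 = (s + 1) + 1 by ring, Real.Gamma_add_one (by linarith),
      Real.Gamma_add_one (by linarith), mul_assoc]
  have hpos : 0 < (s + 1) * s * Real.Gamma s :=
    hstep ▸ Real.Gamma_pos_of_pos (by linarith)
  exact pos_of_mul_pos_right hpos (mul_nonneg_of_nonpos_of_nonpos (by linarith) (by linarith))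

lemma sigmaY_pos {C Y : ℝ} (hC : 0 < C) (hY1 : 1 < Y) (hY2 : Y < 2) : 0 < sigmaY C Y := by
  have hΓ : 0 < Real.Gamma (-Y) :=
    Real.Gamma_pos_of_neg_two_lt_of_lt_neg_one (by linarith) (by linarith)
  have hcos : Real.cos (Real.pi * Y / 2) < 0 :=
    Real.cos_neg_of_pi_div_two_lt_of_lt (by nlinarith [Real.pi_pos]) (by nlinarith [Real.pi_pos])
  unfold sigmaY
  have := abs_pos.mpr hcos.ne
  positivity

lemma tendsto_setIntegral_sq_div_sq_add_mul {s : Set ℝ} {f : ℝ → ℝ} (hf : IntegrableOn f s) :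
    Tendsto (fun a : ℝ => ∫ u in s, u ^ 2 / (u ^ 2 + a) * f u) (𝓝[>] 0) (𝓝 (∫ u in s, f u)) := by
  refine tendsto_integral_filter_of_dominated_convergence (fun u => ‖f u‖) ?_ ?_ hf.norm ?_
  · exact Eventually.of_forall fun a =>
      (Measurable.aestronglyMeasurable (by fun_prop)).mul hf.aestronglyMeasurable
  · filter_upwards [self_mem_nhdsWithin] with a (ha : 0 < a)
    refine Eventually.of_forall fun u => ?_
    rw [norm_mul, Real.norm_of_nonneg (by positivity)]
    exact mul_le_of_le_one_left (norm_nonneg _) (div_le_one_of_le₀ (by linarith) (by positivity))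
  · filter_upwards [ae_restrict_of_ae (volume.ae_ne 0)] with u hu
    have hweight : Tendsto (fun a : ℝ => u ^ 2 / (u ^ 2 + a)) (𝓝[>] 0) (𝓝 1) := by
      have : Tendsto (fun a : ℝ => u ^ 2 / (u ^ 2 + a)) (𝓝 0) (𝓝 (u ^ 2 / (u ^ 2 + 0))) :=
        tendsto_const_nhds.div (tendsto_const_nhds.add tendsto_id) (by simpa using hu)
      rw [add_zero, div_self (by positivity)] at this
      exact this.mono_left nhdsWithin_le_nhds
    simpa using hweight.mul_const (f u)

lemma setIntegral_Ioi_exp_neg_mul_rpow {σ Y : ℝ} (hσ : 0 < σ) (hY : 0 < Y) :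
    ∫ u in Ioi (0 : ℝ), Real.exp (-σ * u ^ Y) = σ ^ (-(1 / Y)) * Real.Gamma (1 / Y) / Y := by
  rw [integral_exp_neg_mul_rpow hY hσ, Real.Gamma_add_one (by positivity), neg_div]
  ring

lemma tendsto_rpow_sq_div_four_nhdsGT_zero {p : ℝ} (hp : 0 < p) :
    Tendsto (fun t : ℝ => (t ^ p) ^ 2 / 4) (𝓝[>] 0) (𝓝[>] 0) := by
  refine tendsto_nhdsWithin_of_tendsto_nhds_of_eventually_within _ ?_ ?_
  · have : Tendsto (fun t : ℝ => (t ^ p) ^ 2 / 4) (𝓝 0) (𝓝 (((0 : ℝ) ^ p) ^ 2 / 4)) :=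
      ((Real.continuousAt_rpow_const 0 p (Or.inr hp.le)).tendsto.pow 2).div_const 4
    rw [Real.zero_rpow hp.ne'] at this
    simpa using this.mono_left nhdsWithin_le_nhds
  · filter_upwards [self_mem_nhdsWithin] with t (ht : 0 < t)
    exact div_pos (pow_pos (Real.rpow_pos_of_pos ht p) 2) four_pos

lemma setIntegral_Ioi_sq_mul_exp_div_rescale {σ Y t : ℝ} (hY : Y ≠ 0) (ht : 0 < t) :
    ∫ w in Ioi (0 : ℝ), w ^ 2 * Real.exp (-σ * t * w ^ Y) / (w ^ 2 + 1 / 4)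
      = (t ^ (1 / Y))⁻¹ *
        ∫ u in Ioi (0 : ℝ), u ^ 2 / (u ^ 2 + (t ^ (1 / Y)) ^ 2 / 4) * Real.exp (-σ * u ^ Y) := by
  set s := t ^ (1 / Y)
  have hs : 0 < s := Real.rpow_pos_of_pos ht _
  have hsY : s ^ Y = t := by
    rw [← Real.rpow_mul ht.le, one_div_mul_cancel hY, Real.rpow_one]
  have hsub := integral_comp_mul_left_Ioi
    (fun u => u ^ 2 / (u ^ 2 + s ^ 2 / 4) * Real.exp (-σ * u ^ Y)) 0 hs
  rw [mul_zero, smul_eq_mul] at hsub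
  rw [← hsub]
  refine setIntegral_congr_fun measurableSet_Ioi fun w (hw : 0 < w) => ?_
  rw [Real.mul_rpow hs.le hw.le, hsY]
  field_simp

theorem stmt10_general (C G M Y : ℝ) (hC : 0 < C)
    (hY1 : 1 < Y) (hY2 : Y < 2) :
    Tendsto
      (fun t : ℝ =>
        ((btilde C G M Y) ^ 2 * t ^ 2 / (2 * Real.pi)) *
          (∫ w in Set.Ioi (0 : ℝ),
            w ^ 2 * Real.exp (-(sigmaY C Y) * t * w ^ Y) / (w ^ 2 + 1/4))
          / t ^ (2 - 1/Y))
      (𝓝[>] 0)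
      (𝓝 ((btilde C G M Y) ^ 2 * (sigmaY C Y) ^ (-(1/Y)) * Real.Gamma (1/Y)
        / (2 * Real.pi * Y))) := by
  have hY : 0 < Y := by linarith
  set σ := sigmaY C Y
  set b := btilde C G M Y
  have hσ : 0 < σ := sigmaY_pos hC hY1 hY2
  have hint : IntegrableOn (fun u : ℝ => Real.exp (-σ * u ^ Y)) (Ioi 0) := by
    simpa using integrableOn_rpow_mul_exp_neg_mul_rpow neg_one_lt_zero hY hσ
  have hlim := (tendsto_setIntegral_sq_div_sq_add_mul hint).comp
    (tendsto_rpow_sq_div_four_nhdsGT_zero (one_div_pos.mpr hY))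
  rw [setIntegral_Ioi_exp_neg_mul_rpow hσ hY] at hlim
  rw [show b ^ 2 * σ ^ (-(1 / Y)) * Real.Gamma (1 / Y) / (2 * Real.pi * Y)
      = b ^ 2 / (2 * Real.pi) * (σ ^ (-(1 / Y)) * Real.Gamma (1 / Y) / Y) by ring]
  refine (hlim.const_mul _).congr' ?_
  filter_upwards [self_mem_nhdsWithin] with t (ht : 0 < t)
  rw [Function.comp_apply, setIntegral_Ioi_sq_mul_exp_div_rescale hY.ne' ht,
    Real.rpow_sub ht, Real.rpow_two]
  generalize ∫ u in Ioi (0 : ℝ), u ^ 2 / (u ^ 2 + (t ^ (1 / Y)) ^ 2 / 4) * Real.exp (-σ * u ^ Y) = J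
  field_simp

/-- The drift-squared Laplace integral `L₂₁(t)` satisfies
`L₂₁(t)/t^{2-1/Y} → a₂₁ = b̃²·σ_Y^{-1/Y}·Γ(1/Y)/(2πY)` as `t → 0⁺`. -/
theorem stmt10 (C G M Y : ℝ) (hC : 0 < C) (hG : 0 ≤ G) (hM : 1 < M)
    (hY1 : 1 < Y) (hY2 : Y < 2) :
    Tendsto
      (fun t : ℝ =>
        ((btilde C G M Y) ^ 2 * t ^ 2 / (2 * Real.pi)) *
          (∫ w in Set.Ioi (0 : ℝ),
            w ^ 2 * Real.exp (-(sigmaY C Y) * t * w ^ Y) / (w ^ 2 + 1/4))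
          / t ^ (2 - 1/Y))
      (𝓝[>] 0)
      (𝓝 ((btilde C G M Y) ^ 2 * (sigmaY C Y) ^ (-(1/Y)) * Real.Gamma (1/Y)
        / (2 * Real.pi * Y))) :=
  stmt10_general C G M Y hC hY1 hY2
end

section
/- With the CGMY data below, define β₁ʳ := C·Y·Γ(-Y)·(M̃ + G̃)·sin(Yπ/2) and, for t > 0, L₁₂(t) := (β₁ʳ/π)·t·∫₀^∞ w^{Y-1}·(1 - exp(-σ_Y·t·w^Y))/(w² + 1/4) dw. Then lim_{t→0⁺} L₁₂(t)/t^{2/Y} = a₁₂, where a₁₂ := -(β₁ʳ/(π·Y))·σ_Y^{(2-Y)/Y}·Γ(1 - 2/Y). -/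
open MeasureTheory Filter Topology Complex

/-!
Substituting `w = t^{-1/Y} u` turns `t^{1-2/Y} ∫₀^∞ w^{Y-1}(1 - e^{-σ t w^Y})/(w² + 1/4) dw` into
`∫₀^∞ u^{Y-1}(1 - e^{-σ u^Y})/(u² + t^{2/Y}/4) du`, which by dominated convergence tends to
`∫₀^∞ u^{Y-3}(1 - e^{-σ u^Y}) du`; this converges exactly because `1 < Y < 2`. Integrating by
parts against `u^{Y-2}/(Y-2)` turns it into a Gamma integral, whose value is
`-σ^{(2-Y)/Y} Γ(1 - 2/Y)/Y`.
-/

open Set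

lemma Real.abs_one_sub_exp_neg_le {x : ℝ} (hx : 0 ≤ x) : |1 - Real.exp (-x)| ≤ x := by
  rw [abs_of_nonneg (sub_nonneg.mpr (Real.exp_le_one_iff.mpr (neg_nonpos.mpr hx)))]
  linarith [Real.one_sub_le_exp_neg x]

lemma Real.abs_one_sub_exp_neg_le_one {x : ℝ} (hx : 0 ≤ x) : |1 - Real.exp (-x)| ≤ 1 := by
  rw [abs_of_nonneg (sub_nonneg.mpr (Real.exp_le_one_iff.mpr (neg_nonpos.mpr hx)))]
  linarith [Real.exp_pos (-x)]

lemma tendsto_rpow_nhdsGT_zero {q : ℝ} (hq : 0 < q) :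
    Tendsto (fun u : ℝ => u ^ q) (𝓝[>] 0) (𝓝 0) := by
  simpa [Real.zero_rpow hq.ne'] using
    (Real.continuousAt_rpow_const 0 q (Or.inr hq.le)).tendsto.mono_left nhdsWithin_le_nhds

section OneSubExp

variable {σ Y : ℝ}

lemma isBigO_one_sub_exp_neg_mul_rpow_nhdsGT (hσ : 0 ≤ σ) :
    (fun u : ℝ => 1 - Real.exp (-σ * u ^ Y)) =O[𝓝[>] 0] (· ^ Y) := by
  refine Asymptotics.IsBigO.of_bound σ ?_
  filter_upwards [self_mem_nhdsWithin] with u (hu : 0 < u)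
  rw [Real.norm_eq_abs, Real.norm_of_nonneg (by positivity : 0 ≤ u ^ Y), neg_mul]
  exact Real.abs_one_sub_exp_neg_le (by positivity)

lemma isBigO_one_sub_exp_neg_mul_rpow_atTop (hσ : 0 ≤ σ) :
    (fun u : ℝ => 1 - Real.exp (-σ * u ^ Y)) =O[atTop] (fun _ => (1 : ℝ)) := by
  refine Asymptotics.IsBigO.of_bound 1 ?_
  filter_upwards [eventually_gt_atTop 0] with u hu
  rw [Real.norm_eq_abs, norm_one, one_mul, neg_mul]
  exact Real.abs_one_sub_exp_neg_le_one (by positivity)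

lemma integrableOn_rpow_mul_one_sub_exp_neg_mul_rpow {p : ℝ} (hσ : 0 ≤ σ) (hp : -Y < p)
    (hp0 : p < 0) :
    IntegrableOn (fun u : ℝ => u ^ (p - 1) * (1 - Real.exp (-σ * u ^ Y))) (Ioi 0) := by
  have hY : 0 < Y := by linarith
  refine mellin_convergent_of_isBigO_scalar (a := 0) (b := -Y) ?_ ?_ hp0 ?_ hp
  · refine ContinuousOn.locallyIntegrableOn ?_ measurableSet_Ioi
    exact (continuous_const.sub (Real.continuous_exp.comp
      (continuous_const.mul (Real.continuous_rpow_const hY.le)))).continuousOn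
  · simpa using isBigO_one_sub_exp_neg_mul_rpow_atTop (Y := Y) hσ
  · simpa using isBigO_one_sub_exp_neg_mul_rpow_nhdsGT (Y := Y) hσ

lemma integral_rpow_mul_one_sub_exp_neg_mul_rpow {p : ℝ} (hσ : 0 < σ) (hp : -Y < p)
    (hp0 : p < 0) :
    ∫ u in Ioi 0, u ^ (p - 1) * (1 - Real.exp (-σ * u ^ Y))
      = -(σ ^ (-p / Y) * Real.Gamma (p / Y) / Y) := by
  have hY : 0 < Y := by linarith
  set F := fun u : ℝ => 1 - Real.exp (-σ * u ^ Y)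
  set V := fun u : ℝ => u ^ p / p
  have hF : ∀ u ∈ Ioi (0 : ℝ), HasDerivAt F (σ * Y * u ^ (Y - 1) * Real.exp (-σ * u ^ Y)) u := by
    intro u hu
    exact ((((Real.hasDerivAt_rpow_const (Or.inl (ne_of_gt hu))).const_mul (-σ)).exp).const_sub
      1).congr_deriv (by ring)
  have hV : ∀ u ∈ Ioi (0 : ℝ), HasDerivAt V (u ^ (p - 1)) u := by
    intro u hu
    exact ((Real.hasDerivAt_rpow_const (Or.inl (ne_of_gt hu))).div_const p).congr_deriv
      (mul_div_cancel_left₀ _ hp0.ne)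
  have hFV' : IntegrableOn (F * fun u => u ^ (p - 1)) (Ioi 0) :=
    (integrableOn_rpow_mul_one_sub_exp_neg_mul_rpow hσ.le hp hp0).congr_fun
      (fun u _ => mul_comm _ _) measurableSet_Ioi
  have hF'V_eq : EqOn (fun u => σ * Y * u ^ (Y - 1) * Real.exp (-σ * u ^ Y) * V u)
      (fun u => σ * Y / p * (u ^ (p + Y - 1) * Real.exp (-σ * u ^ Y))) (Ioi 0) := by
    intro u hu
    simp only [V, show p + Y - 1 = (Y - 1) + p by ring, Real.rpow_add hu]
    ring
  have hF'V : IntegrableOn (fun u => σ * Y * u ^ (Y - 1) * Real.exp (-σ * u ^ Y) * V u) (Ioi 0) :=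
    IntegrableOn.congr_fun ((integrableOn_rpow_mul_exp_neg_mul_rpow (s := p + Y - 1) (by linarith)
      hY hσ).const_mul (σ * Y / p)) hF'V_eq.symm measurableSet_Ioi
  have hlim0 : Tendsto (F * V) (𝓝[>] 0) (𝓝 0) := by
    refine ((isBigO_one_sub_exp_neg_mul_rpow_nhdsGT hσ.le).mul
      (Asymptotics.isBigO_refl V _)).trans_tendsto ?_
    refine (by simpa using (tendsto_rpow_nhdsGT_zero (q := Y + p) (by linarith)).div_const p :
      Tendsto (fun u : ℝ => u ^ (Y + p) / p) _ _).congr' ?_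
    filter_upwards [self_mem_nhdsWithin] with u hu
    simp only [V, Real.rpow_add hu]
    ring
  have hlimTop : Tendsto (F * V) atTop (𝓝 0) := by
    refine ((isBigO_one_sub_exp_neg_mul_rpow_atTop hσ.le).mul
      (Asymptotics.isBigO_refl V _)).trans_tendsto ?_
    simpa [V] using (tendsto_rpow_neg_atTop (y := -p) (by linarith)).div_const p
  have hGamma : ∫ u in Ioi 0, σ * Y * u ^ (Y - 1) * Real.exp (-σ * u ^ Y) * V u
      = σ ^ (-p / Y) * Real.Gamma (p / Y) / Y := by
    rw [setIntegral_congr_fun measurableSet_Ioi hF'V_eq, integral_const_mul,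
      _root_.integral_rpow_mul_exp_neg_mul_rpow hY (by linarith) hσ,
      show (p + Y - 1 + 1) / Y = p / Y + 1 by field_simp; ring,
      show -(p + Y - 1 + 1) / Y = -p / Y - 1 by field_simp; ring,
      Real.Gamma_add_one (div_neg_of_neg_of_pos hp0 hY).ne, Real.rpow_sub_one hσ.ne']
    field_simp [hp0.ne]
  calc ∫ u in Ioi 0, u ^ (p - 1) * F u = ∫ u in Ioi 0, F u * u ^ (p - 1) :=
        setIntegral_congr_fun measurableSet_Ioi fun u _ => mul_comm _ _
    _ = 0 - 0 - ∫ u in Ioi 0, σ * Y * u ^ (Y - 1) * Real.exp (-σ * u ^ Y) * V u :=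
        integral_Ioi_mul_deriv_eq_deriv_mul hF hV hFV' hF'V hlim0 hlimTop
    _ = _ := by rw [hGamma]; ring

end OneSubExp

lemma tendsto_setIntegral_div_sq_add {f : ℝ → ℝ}
    (hf : IntegrableOn (fun u => f u / u ^ 2) (Ioi 0)) :
    Tendsto (fun ε => ∫ u in Ioi 0, f u / (u ^ 2 + ε)) (𝓝[≥] 0)
      (𝓝 (∫ u in Ioi 0, f u / u ^ 2)) := by
  refine tendsto_integral_filter_of_dominated_convergence (fun u => ‖f u / u ^ 2‖) ?_ ?_ hf.norm ?_
  · refine Eventually.of_forall fun ε => ?_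
    refine (hf.aestronglyMeasurable.mul (by fun_prop : Measurable fun u : ℝ =>
      u ^ 2 / (u ^ 2 + ε)).aestronglyMeasurable).congr ?_
    filter_upwards [ae_restrict_mem measurableSet_Ioi] with u (hu : 0 < u)
    simp only [Pi.mul_apply]
    field_simp
  · filter_upwards [self_mem_nhdsWithin] with ε (hε : 0 ≤ ε)
    filter_upwards [ae_restrict_mem measurableSet_Ioi] with u (hu : 0 < u)
    rw [norm_div, norm_div]
    refine div_le_div_of_nonneg_left (norm_nonneg _) (norm_pos_iff.mpr (by positivity)) ?_
    rw [Real.norm_of_nonneg (by positivity), Real.norm_of_nonneg (by positivity)]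
    linarith
  · filter_upwards [ae_restrict_mem measurableSet_Ioi] with u (hu : 0 < u)
    have hden : Tendsto (fun ε => u ^ 2 + ε) (𝓝[≥] 0) (𝓝 (u ^ 2)) := by
      have h : Tendsto (fun ε => u ^ 2 + ε) (𝓝 0) (𝓝 (u ^ 2 + 0)) :=
        tendsto_const_nhds.add tendsto_id
      simpa using h.mono_left nhdsWithin_le_nhds
    exact tendsto_const_nhds.div hden (by positivity)

lemma mul_integral_div_rpow_eq {σ Y t : ℝ} (hY : Y ≠ 0) (ht : 0 < t) :
    t * (∫ w in Ioi 0, w ^ (Y - 1) * (1 - Real.exp (-σ * t * w ^ Y)) / (w ^ 2 + 1/4))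
        / t ^ (2 / Y)
      = ∫ u in Ioi 0, u ^ (Y - 1) * (1 - Real.exp (-σ * u ^ Y)) / (u ^ 2 + t ^ (2 / Y) / 4) := by
  obtain ⟨c, hc, rfl⟩ : ∃ c : ℝ, 0 < c ∧ t = c ^ Y :=
    ⟨t ^ (1 / Y), by positivity,
      by rw [← Real.rpow_mul ht.le, one_div_mul_cancel hY, Real.rpow_one]⟩
  have hc2 : (c ^ Y) ^ (2 / Y) = c ^ 2 := by
    rw [← Real.rpow_mul hc.le, mul_div_cancel₀ _ hY, Real.rpow_two]
  set g := fun u : ℝ => u ^ (Y - 1) * (1 - Real.exp (-σ * u ^ Y)) / (u ^ 2 + c ^ 2 / 4)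
  have hscale : ∀ w ∈ Ioi (0 : ℝ), g (c * w)
      = c ^ Y / c ^ 3 * (w ^ (Y - 1) * (1 - Real.exp (-σ * c ^ Y * w ^ Y)) / (w ^ 2 + 1/4)) := by
    intro w (hw : 0 < w)
    simp only [g, Real.mul_rpow hc.le hw.le, Real.rpow_sub_one hc.ne', Real.rpow_sub_one hw.ne']
    field_simp
  have hsub := integral_comp_mul_left_Ioi g 0 hc
  rw [setIntegral_congr_fun measurableSet_Ioi hscale, integral_const_mul, mul_zero,
    smul_eq_mul] at hsub
  rw [hc2]
  change _ = ∫ u in Ioi 0, g u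
  rw [← mul_inv_cancel_left₀ hc.ne' (∫ u in Ioi 0, g u), ← hsub]
  generalize ∫ w in Ioi 0, w ^ (Y - 1) * (1 - Real.exp (-σ * c ^ Y * w ^ Y)) / (w ^ 2 + 1/4) = I
  field_simp

lemma tendsto_mul_integral_div_rpow {σ Y : ℝ} (hσ : 0 < σ) (hY1 : 1 < Y) (hY2 : Y < 2) :
    Tendsto (fun t : ℝ => t *
        (∫ w in Ioi 0, w ^ (Y - 1) * (1 - Real.exp (-σ * t * w ^ Y)) / (w ^ 2 + 1/4)) / t ^ (2 / Y))
      (𝓝[>] 0) (𝓝 (-(σ ^ ((2 - Y) / Y) * Real.Gamma (1 - 2 / Y) / Y))) := by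
  have hY : 0 < Y := by linarith
  have hf : EqOn (fun u : ℝ => u ^ (Y - 1) * (1 - Real.exp (-σ * u ^ Y)) / u ^ 2)
      (fun u => u ^ (Y - 2 - 1) * (1 - Real.exp (-σ * u ^ Y))) (Ioi 0) := by
    intro u (hu : 0 < u)
    simp only [show Y - 2 - 1 = (Y - 1) - 2 by ring, Real.rpow_sub hu, Real.rpow_two]
    ring
  have hint := (integrableOn_rpow_mul_one_sub_exp_neg_mul_rpow hσ.le (p := Y - 2) (by linarith)
    (by linarith)).congr_fun hf.symm measurableSet_Ioi
  have hval : ∫ u in Ioi 0, u ^ (Y - 1) * (1 - Real.exp (-σ * u ^ Y)) / u ^ 2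
      = -(σ ^ ((2 - Y) / Y) * Real.Gamma (1 - 2 / Y) / Y) := by
    rw [setIntegral_congr_fun measurableSet_Ioi hf,
      integral_rpow_mul_one_sub_exp_neg_mul_rpow hσ (by linarith) (by linarith),
      show -(Y - 2) / Y = (2 - Y) / Y by ring, show (Y - 2) / Y = 1 - 2 / Y by field_simp]
  have hε : Tendsto (fun t : ℝ => t ^ (2 / Y) / 4) (𝓝[>] 0) (𝓝[≥] 0) := by
    refine tendsto_nhdsWithin_iff.mpr ⟨?_, ?_⟩
    · simpa using (tendsto_rpow_nhdsGT_zero (q := 2 / Y) (by positivity)).div_const 4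
    · filter_upwards [self_mem_nhdsWithin] with t (ht : 0 < t)
      exact div_nonneg (Real.rpow_nonneg ht.le _) (by norm_num)
  rw [← hval]
  refine ((tendsto_setIntegral_div_sq_add hint).comp hε).congr' ?_
  filter_upwards [self_mem_nhdsWithin] with t (ht : 0 < t)
  exact (mul_integral_div_rpow_eq hY.ne' ht).symm

theorem stmt11_general (C G M Y : ℝ) (hC : 0 < C)
    (hY1 : 1 < Y) (hY2 : Y < 2) :
    Tendsto
      (fun t : ℝ =>
        ((C * Y * Real.Gamma (-Y) * ((M - 1/2) + (G + 1/2)) * Real.sin (Y * Real.pi / 2))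
            / Real.pi) * t *
          (∫ w in Set.Ioi (0 : ℝ),
            w ^ (Y - 1) * (1 - Real.exp (-(sigmaY C Y) * t * w ^ Y)) / (w ^ 2 + 1/4))
          / t ^ (2/Y))
      (𝓝[>] 0)
      (𝓝 (-((C * Y * Real.Gamma (-Y) * ((M - 1/2) + (G + 1/2)) * Real.sin (Y * Real.pi / 2))
          / (Real.pi * Y)) * (sigmaY C Y) ^ ((2 - Y)/Y) * Real.Gamma (1 - 2/Y))) := by
  set β := C * Y * Real.Gamma (-Y) * ((M - 1/2) + (G + 1/2)) * Real.sin (Y * Real.pi / 2)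
  have h := (tendsto_mul_integral_div_rpow (sigmaY_pos hC hY1 hY2) hY1 hY2).const_mul (β / Real.pi)
  convert h using 2 <;> ring

/-- The binomial Laplace integral `L₁₂(t)` satisfies
`L₁₂(t)/t^{2/Y} → a₁₂ = -(β₁ʳ/(πY))·σ_Y^{(2-Y)/Y}·Γ(1-2/Y)` as `t → 0⁺`,
where `β₁ʳ = C·Y·Γ(-Y)·(M̃+G̃)·sin(Yπ/2)`. -/
theorem stmt11 (C G M Y : ℝ) (hC : 0 < C) (hG : 0 ≤ G) (hM : 1 < M)
    (hY1 : 1 < Y) (hY2 : Y < 2) :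
    Tendsto
      (fun t : ℝ =>
        ((C * Y * Real.Gamma (-Y) * ((M - 1/2) + (G + 1/2)) * Real.sin (Y * Real.pi / 2))
            / Real.pi) * t *
          (∫ w in Set.Ioi (0 : ℝ),
            w ^ (Y - 1) * (1 - Real.exp (-(sigmaY C Y) * t * w ^ Y)) / (w ^ 2 + 1/4))
          / t ^ (2/Y))
      (𝓝[>] 0)
      (𝓝 (-((C * Y * Real.Gamma (-Y) * ((M - 1/2) + (G + 1/2)) * Real.sin (Y * Real.pi / 2))
          / (Real.pi * Y)) * (sigmaY C Y) ^ ((2 - Y)/Y) * Real.Gamma (1 - 2/Y))) :=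
  stmt11_general C G M Y hC hY1 hY2
end

section
/- With the CGMY data below, define the characteristic exponent Ψ(u) := i·u·b̃ + C·Γ(-Y)·((M - i·u)^Y + (G + i·u)^Y - M^Y - G^Y) for u ∈ ℝ, using principal-branch complex powers. Then for every real u, lim_{t→0⁺} t·Ψ(t^{-1/Y}·u) = -σ_Y·|u|^Y (limit in ℂ). Consequently exp(t·Ψ(t^{-1/Y}·u)) converges to exp(-σ_Y·|u|^Y), the characteristic function of a symmetric Y-stable law, as t → 0⁺; this is the characteristic-function form of the weak convergence X_t/t^{1/Y} ⇒ Z for the CGMY process. -/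
open MeasureTheory Filter Topology Complex

/-- The CGMY characteristic exponent `Ψ`. -/
noncomputable def PsiCGMY (C G M Y : ℝ) (u : ℝ) : ℂ :=
  Complex.I * (u : ℂ) * ((btilde C G M Y : ℝ) : ℂ)
    + ((C * Real.Gamma (-Y) : ℝ) : ℂ) *
      (((M : ℂ) - Complex.I * (u : ℂ)) ^ (Y : ℂ)
        + ((G : ℂ) + Complex.I * (u : ℂ)) ^ (Y : ℂ)
        - ((M ^ Y : ℝ) : ℂ) - ((G ^ Y : ℝ) : ℂ))

/-!
Put `s = t ^ (1 / Y)`, so that `t * Ψ(t ^ (-1 / Y) * u) = s ^ Y * Ψ(u / s)`. Since `s ^ Y` is a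
positive real it can be moved inside the principal complex powers, which turns the product into
`i u b̃ s ^ (Y - 1) + C Γ(-Y) ((M s - i u) ^ Y + (G s + i u) ^ Y - s ^ Y (M ^ Y + G ^ Y))`.
For `Y > 1` this is continuous at `s = 0`, with value
`C Γ(-Y) ((-i u) ^ Y + (i u) ^ Y) = 2 C Γ(-Y) cos (π Y / 2) |u| ^ Y`, and `cos (π Y / 2) ≤ 0`.
-/

namespace Complex

theorem ofReal_mul_cpow {r : ℝ} (hr : 0 ≤ r) (z w : ℂ) :
    ((r : ℂ) * z) ^ w = (r : ℂ) ^ w * z ^ w := by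
  rcases hr.eq_or_lt with rfl | hr
  · rcases eq_or_ne w 0 with rfl | hw <;> simp [zero_cpow, *]
  rcases eq_or_ne z 0 with rfl | hz
  · rcases eq_or_ne w 0 with rfl | hw <;> simp [zero_cpow, *]
  rw [cpow_def_of_ne_zero (mul_ne_zero (ofReal_ne_zero.2 hr.ne') hz), cpow_def_of_ne_zero hz,
    cpow_def_of_ne_zero (ofReal_ne_zero.2 hr.ne'), log_ofReal_mul hr hz, ofReal_log hr.le,
    add_mul, exp_add]

theorem I_cpow_add_neg_I_cpow (w : ℂ) : I ^ w + (-I) ^ w = 2 * cos (Real.pi / 2 * w) := by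
  rw [cpow_def_of_ne_zero I_ne_zero, cpow_def_of_ne_zero (neg_ne_zero.2 I_ne_zero), log_I,
    log_neg_I, cos]
  ring_nf

theorem neg_I_mul_cpow_add_I_mul_cpow (s y : ℝ) :
    (-(I * s)) ^ (y : ℂ) + (I * s) ^ (y : ℂ)
      = ((2 * |s| ^ y * Real.cos (Real.pi * y / 2) : ℝ) : ℂ) := by
  wlog hs : 0 ≤ s generalizing s
  · simpa [add_comm, abs_neg] using this (-s) (by linarith)
  rw [show -(I * s) = (s : ℂ) * -I by ring, show I * s = (s : ℂ) * I by ring,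
    ofReal_mul_cpow hs, ofReal_mul_cpow hs, ← mul_add, add_comm, I_cpow_add_neg_I_cpow,
    abs_of_nonneg hs, ← ofReal_cpow hs]
  push_cast
  ring_nf

end Complex

noncomputable def scaledPsiCGMY (C G M Y u s : ℝ) : ℂ :=
  I * u * btilde C G M Y * ((s ^ (Y - 1) : ℝ) : ℂ)
    + ((C * Real.Gamma (-Y) : ℝ) : ℂ) *
      ((((M * s : ℝ) : ℂ) - I * u) ^ (Y : ℂ) + (((G * s : ℝ) : ℂ) + I * u) ^ (Y : ℂ)
        - ((s ^ Y * M ^ Y : ℝ) : ℂ) - ((s ^ Y * G ^ Y : ℝ) : ℂ))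

section Scaling

variable (C G M Y u : ℝ)

theorem rpow_mul_PsiCGMY_inv_mul {s : ℝ} (hs : 0 < s) :
    ((s ^ Y : ℝ) : ℂ) * PsiCGMY C G M Y (s⁻¹ * u) = scaledPsiCGMY C G M Y u s := by
  have hscale (z : ℂ) : ((s ^ Y : ℝ) : ℂ) * z ^ (Y : ℂ) = ((s : ℂ) * z) ^ (Y : ℂ) := by
    rw [ofReal_mul_cpow hs.le, ofReal_cpow hs.le]
  have hs' : (s : ℂ) ≠ 0 := ofReal_ne_zero.2 hs.ne'
  have hM : (s : ℂ) * (M - I * ((s⁻¹ * u : ℝ) : ℂ)) = ((M * s : ℝ) : ℂ) - I * u := by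
    push_cast; field_simp
  have hG : (s : ℂ) * (G + I * ((s⁻¹ * u : ℝ) : ℂ)) = ((G * s : ℝ) : ℂ) + I * u := by
    push_cast; field_simp
  have hdrift : s ^ Y * s⁻¹ = s ^ (Y - 1) := by
    rw [Real.rpow_sub_one hs.ne', div_eq_mul_inv]
  rw [PsiCGMY, scaledPsiCGMY, ← hM, ← hG, ← hscale, ← hscale, ← hdrift]
  push_cast
  ring

theorem continuousAt_scaledPsiCGMY_zero (hY : 1 < Y) :
    ContinuousAt (scaledPsiCGMY C G M Y u) 0 := by
  have hcpow (z : ℂ) (hz : z.re = 0) : ContinuousAt (fun z : ℂ => z ^ (Y : ℂ)) z :=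
    continuousAt_cpow_const_of_re_pos (.inl hz.ge) (by simp; linarith)
  have h1 : ContinuousAt (fun s : ℝ => (((M * s : ℝ) : ℂ) - I * u) ^ (Y : ℂ)) 0 :=
    (hcpow (-(I * u)) (by simp)).comp_of_eq (by fun_prop) (by simp)
  have h2 : ContinuousAt (fun s : ℝ => (((G * s : ℝ) : ℂ) + I * u) ^ (Y : ℂ)) 0 :=
    (hcpow (I * u) (by simp)).comp_of_eq (by fun_prop) (by simp)
  have h3 : ContinuousAt (fun s : ℝ => s ^ (Y - 1)) 0 :=
    Real.continuousAt_rpow_const _ _ (.inr (by linarith))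
  have h4 : ContinuousAt (fun s : ℝ => s ^ Y) 0 :=
    Real.continuousAt_rpow_const _ _ (.inr (by linarith))
  unfold scaledPsiCGMY
  fun_prop

theorem scaledPsiCGMY_zero (hY1 : 1 < Y) (hY3 : Y ≤ 3) :
    scaledPsiCGMY C G M Y u 0 = ((-(sigmaY C Y) * |u| ^ Y : ℝ) : ℂ) := by
  have hcos : Real.cos (Real.pi * Y / 2) ≤ 0 :=
    Real.cos_nonpos_of_pi_div_two_le_of_le (by nlinarith [Real.pi_pos])
      (by nlinarith [Real.pi_pos])
  rw [scaledPsiCGMY, sigmaY, abs_of_nonpos hcos, Real.zero_rpow (by linarith : Y - 1 ≠ 0),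
    Real.zero_rpow (by linarith : Y ≠ 0)]
  simp only [mul_zero, ofReal_zero, zero_sub, zero_add, zero_mul, sub_zero,
    neg_I_mul_cpow_add_I_mul_cpow]
  push_cast
  ring

end Scaling

theorem stmt16_general (C G M Y : ℝ) (hY1 : 1 < Y) (hY2 : Y < 2) :
    ∀ u : ℝ,
      Tendsto (fun t : ℝ => (t : ℂ) * PsiCGMY C G M Y (t ^ (-(1/Y)) * u))
        (𝓝[>] 0) (𝓝 (((-(sigmaY C Y) * |u| ^ Y : ℝ)) : ℂ)) ∧
      Tendsto (fun t : ℝ => Complex.exp ((t : ℂ) * PsiCGMY C G M Y (t ^ (-(1/Y)) * u)))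
        (𝓝[>] 0) (𝓝 (Complex.exp (((-(sigmaY C Y) * |u| ^ Y : ℝ)) : ℂ))) := by
  intro u
  have hroot : Tendsto (fun t : ℝ => t ^ (1 / Y)) (𝓝[>] 0) (𝓝 0) := by
    have := (Real.continuousAt_rpow_const 0 (1 / Y) (.inr (by positivity))).tendsto
    rw [Real.zero_rpow (by positivity)] at this
    exact this.mono_left nhdsWithin_le_nhds
  have hlim : Tendsto (fun t : ℝ => (t : ℂ) * PsiCGMY C G M Y (t ^ (-(1/Y)) * u))
      (𝓝[>] 0) (𝓝 (((-(sigmaY C Y) * |u| ^ Y : ℝ)) : ℂ)) := by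
    rw [← scaledPsiCGMY_zero C G M Y u hY1 (by linarith)]
    refine ((continuousAt_scaledPsiCGMY_zero C G M Y u hY1).tendsto.comp hroot).congr' ?_
    filter_upwards [self_mem_nhdsWithin] with t (ht : 0 < t)
    rw [Function.comp_apply, ← rpow_mul_PsiCGMY_inv_mul _ _ _ _ _ (Real.rpow_pos_of_pos ht _),
      ← Real.rpow_mul ht.le, one_div_mul_cancel (by linarith), Real.rpow_one,
      ← Real.rpow_neg_one, ← Real.rpow_mul ht.le, mul_neg_one]
  exact ⟨hlim, (continuous_exp.tendsto _).comp hlim⟩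

/-- Stable-domain-of-attraction rescaling: for every real `u`,
`t·Ψ(t^{-1/Y}·u) → -σ_Y·|u|^Y` in `ℂ` as `t → 0⁺`, and consequently
`exp(t·Ψ(t^{-1/Y}·u)) → exp(-σ_Y·|u|^Y)`, the characteristic function of a
symmetric `Y`-stable law. -/
theorem stmt16 (C G M Y : ℝ) (hC : 0 < C) (hG : 0 ≤ G) (hM : 1 < M)
    (hY1 : 1 < Y) (hY2 : Y < 2) :
    ∀ u : ℝ,
      Tendsto (fun t : ℝ => (t : ℂ) * PsiCGMY C G M Y (t ^ (-(1/Y)) * u))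
        (𝓝[>] 0) (𝓝 (((-(sigmaY C Y) * |u| ^ Y : ℝ)) : ℂ)) ∧
      Tendsto (fun t : ℝ => Complex.exp ((t : ℂ) * PsiCGMY C G M Y (t ^ (-(1/Y)) * u)))
        (𝓝[>] 0) (𝓝 (Complex.exp (((-(sigmaY C Y) * |u| ^ Y : ℝ)) : ℂ))) :=
  stmt16_general C G M Y hY1 hY2
end
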